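/- arXiv:1706.10291 — 8 statements merged into one kernel-verified Lean document; each statement's English description precedes it below -/
import Mathlib

section
/- Let x, x_k be vectors in ℝ^d and let φ ∈ ℝ^d be a unit vector. Define the phase-adapting Kaczmarz update x_{k+1} = x_k + (σ(⟨x_k,φ⟩)·|⟨x,φ⟩| − ⟨x_k,φ⟩)·φ. Then, writing z_k = x − x_k and z_{k+1} = x − x_{k+1}, one has the exact identity ‖z_{k+1}‖² = ‖z_k‖² − ⟨z_k,φ⟩² + (σ(⟨x,φ⟩) − σ(⟨x_k,φ⟩))²·⟨x,φ⟩². -/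
open scoped RealInnerProductSpace

/-- The sign function with the convention `σ(w) = 1` if `w ≥ 0` and `σ(w) = -1` if `w < 0`. -/
noncomputable def sgn (w : ℝ) : ℝ := if 0 ≤ w then 1 else -1

lemma sgn_sq (w : ℝ) : sgn w ^ 2 = 1 := by
  unfold sgn; split <;> norm_num

lemma abs_eq_sgn_mul (w : ℝ) : |w| = sgn w * w := by
  unfold sgn
  rcases le_or_gt 0 w with h | h
  · simp [abs_of_nonneg h, h]
  · simp [abs_of_neg h, not_le.mpr h]

/-- Exact one-step error identity for the phase-adapting Kaczmarz update:
for a unit vector `φ`, writing `x_{k+1} = x_k + (σ(⟨x_k,φ⟩)|⟨x,φ⟩| − ⟨x_k,φ⟩)φ`,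
`‖x − x_{k+1}‖² = ‖x − x_k‖² − ⟨x − x_k,φ⟩² + (σ(⟨x,φ⟩) − σ(⟨x_k,φ⟩))²⟨x,φ⟩²`. -/
theorem kaczmarz_phase_error_identity (d : ℕ) (x xk φ : EuclideanSpace ℝ (Fin d))
    (hφ : ‖φ‖ = 1) :
    ‖x - (xk + (sgn ⟪xk, φ⟫ * |⟪x, φ⟫| - ⟪xk, φ⟫) • φ)‖ ^ 2
      = ‖x - xk‖ ^ 2 - ⟪x - xk, φ⟫ ^ 2
        + (sgn ⟪x, φ⟫ - sgn ⟪xk, φ⟫) ^ 2 * ⟪x, φ⟫ ^ 2 := by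
  set c : ℝ := sgn ⟪xk, φ⟫ * |⟪x, φ⟫| - ⟪xk, φ⟫ with hc
  have hrw : x - (xk + c • φ) = (x - xk) - c • φ := by abel
  rw [hrw, @norm_sub_sq_real, real_inner_smul_right, norm_smul, inner_sub_left]
  simp only [Real.norm_eq_abs, hφ, mul_one, mul_pow, sq_abs]
  have h1 := sgn_sq ⟪x, φ⟫
  have h2 := sgn_sq ⟪xk, φ⟫
  have h3 := abs_eq_sgn_mul ⟪x, φ⟫
  rw [hc, h3]
  have h12 : sgn ⟪xk, φ⟫ ^ 2 * sgn ⟪x, φ⟫ ^ 2 = 1 := by rw [h1, h2]; ring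
  nlinarith [h1, h2, h12, sq_nonneg (⟪x, φ⟫ : ℝ)]
end

section
/- Let x, x_k be vectors in ℝ^d and let φ ∈ ℝ^d be a unit vector. Define x_{k+1} = x_k + (σ(⟨x_k,φ⟩)·|⟨x,φ⟩| − ⟨x_k,φ⟩)·φ. Then ‖x − x_{k+1}‖² ≤ ‖x − x_k‖² + [(σ(⟨x,φ⟩) − σ(⟨x_k,φ⟩))² − 1]·⟨x − x_k, φ⟩². -/
open scoped RealInnerProductSpace

/-- One-step error bound for the phase-adapting Kaczmarz update with a unit
vector `φ`: `‖x − x_{k+1}‖² ≤ ‖x − x_k‖² + [(σ(⟨x,φ⟩) − σ(⟨x_k,φ⟩))² − 1]·⟨x − x_k,φ⟩²`. -/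
theorem kaczmarz_phase_error_bound (d : ℕ) (x xk φ : EuclideanSpace ℝ (Fin d))
    (hφ : ‖φ‖ = 1) :
    ‖x - (xk + (sgn ⟪xk, φ⟫ * |⟪x, φ⟫| - ⟪xk, φ⟫) • φ)‖ ^ 2
      ≤ ‖x - xk‖ ^ 2
        + ((sgn ⟪x, φ⟫ - sgn ⟪xk, φ⟫) ^ 2 - 1) * ⟪x - xk, φ⟫ ^ 2 := by
  set a := ⟪x, φ⟫ with ha
  set b := ⟪xk, φ⟫ with hb
  set c := sgn b * |a| - b with hc
  have hrw : x - (xk + c • φ) = (x - xk) - c • φ := by abel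
  rw [hrw]
  have hexp : ‖(x - xk) - c • φ‖ ^ 2
      = ‖x - xk‖ ^ 2 - 2 * (c * ⟪x - xk, φ⟫) + c ^ 2 := by
    rw [@norm_sub_sq_real, real_inner_smul_right, norm_smul, mul_pow]
    simp [hφ]
  rw [hexp]
  have hik : ⟪x - xk, φ⟫ = a - b := by
    rw [inner_sub_left]
  rw [hik]
  have habs : sgn b * |a| = sgn b * sgn a * a := by
    unfold sgn
    rcases le_or_gt 0 a with h | h
    · rw [abs_of_nonneg h]; simp [h]
    · rw [abs_of_neg h, if_neg (not_le.mpr h)]; ring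
  rw [hc, habs]
  unfold sgn
  rcases le_or_gt 0 a with h1 | h1 <;> rcases le_or_gt 0 b with h2 | h2 <;>
    simp [h1, h2, not_le.mpr] <;> nlinarith [sq_nonneg (a - b), sq_nonneg (a + b)]
end

section
/- Let δ ∈ (0,1) and let Φ = (φ_1,…,φ_m) be unit vectors in ℝ^d satisfying: (i) for all nonzero x, y ∈ ℝ^d, (1/m)·#{1 ≤ i ≤ m : σ(⟨x,φ_i⟩) ≠ σ(⟨y,φ_i⟩)} ≤ δ + d(x̂,ŷ); (ii) for all z ∈ ℝ^d, (1/m)Σ_{i=1}^m ⟨z,φ_i⟩⁴·1{⟨z,φ_i⟩² ≤ ‖z‖²/(δd)} ≤ 4‖z‖⁴/d²; and (iii) for all z ∈ ℝ^d, (1/m)Σ_{i=1}^m ⟨z,φ_i⟩²·1{⟨z,φ_i⟩² > ‖z‖²/(δd)} ≤ 4δ‖z‖²/d. Then for all nonzero x, y ∈ ℝ^d, (1/m)Σ_{i=1}^m |σ(⟨x,φ_i⟩) − σ(⟨y,φ_i⟩)|²·⟨x−y,φ_i⟩² ≤ (8·(δ + d(x̂,ŷ))^{1/2} + 16δ)·‖x−y‖²/d.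 -/
open InnerProductGeometry Finset
open scoped RealInnerProductSpace Classical

/-!
The mismatch sum is `4 ∑_{i ∈ S} ⟨x - y, φᵢ⟩²` over the set `S` of sign mismatches. Split each
term at the threshold `‖x - y‖² / (δ d)`: the large terms are bounded by the truncated second
moment (iii), and the small ones by Cauchy–Schwarz, `(∑_S aᵢ)² ≤ #S · ∑_S aᵢ²`, where (i) bounds
`#S / m` by `δ + d(x̂, ŷ)` and the truncated fourth moment (ii) bounds `∑ aᵢ²`.
-/

lemma sgn_sub_sgn_sq (a b : ℝ) : (sgn a - sgn b) ^ 2 = if sgn a ≠ sgn b then 4 else 0 := by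
  unfold sgn
  split_ifs <;> norm_num at *

lemma sum_sgn_sub_sgn_sq_mul {ι : Type*} (s : Finset ι) (f g w : ι → ℝ) :
    ∑ i ∈ s, (sgn (f i) - sgn (g i)) ^ 2 * w i
      = 4 * ∑ i ∈ s.filter (fun i => sgn (f i) ≠ sgn (g i)), w i := by
  rw [sum_filter, mul_sum]
  refine sum_congr rfl fun i _ => ?_
  rw [sgn_sub_sgn_sq]
  split_ifs <;> ring

lemma mul_sum_le_sqrt_add_of_threshold {ι : Type*} [Fintype ι] (S : Finset ι) {a : ι → ℝ}
    (ha : ∀ i, 0 ≤ a i) (t : ℝ) {c : ℝ} (hc : 0 ≤ c) :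
    c * ∑ i ∈ S, a i
      ≤ √((c * #S) * (c * ∑ i, if a i ≤ t then a i ^ 2 else 0))
        + c * ∑ i, if t < a i then a i else 0 := by
  have split : ∑ i ∈ S, a i
      = ∑ i ∈ S, (if a i ≤ t then a i else 0) + ∑ i ∈ S, (if t < a i then a i else 0) := by
    rw [← sum_add_distrib]
    refine sum_congr rfl fun i _ => ?_
    by_cases h : a i ≤ t
    · simp [h, not_lt.mpr h]
    · simp [h, not_le.mp h]
  have small : c * ∑ i ∈ S, (if a i ≤ t then a i else 0)
      ≤ √((c * #S) * (c * ∑ i, if a i ≤ t then a i ^ 2 else 0)) := by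
    refine (le_abs_self _).trans (Real.abs_le_sqrt ?_)
    have cauchy_schwarz :=
      sq_sum_le_card_mul_sum_sq (s := S) (f := fun i => if a i ≤ t then a i else 0)
    simp only [ite_pow, zero_pow two_ne_zero] at cauchy_schwarz
    have restrict : ∑ i ∈ S, (if a i ≤ t then a i ^ 2 else 0)
        ≤ ∑ i, if a i ≤ t then a i ^ 2 else 0 :=
      sum_le_univ_sum_of_nonneg fun i => by positivity
    calc (c * ∑ i ∈ S, (if a i ≤ t then a i else 0)) ^ 2
        ≤ c ^ 2 * (#S * ∑ i ∈ S, if a i ≤ t then a i ^ 2 else 0) := by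
          rw [mul_pow]; gcongr
      _ ≤ c ^ 2 * (#S * ∑ i, if a i ≤ t then a i ^ 2 else 0) := by gcongr
      _ = (c * #S) * (c * ∑ i, if a i ≤ t then a i ^ 2 else 0) := by ring
  have large : c * ∑ i ∈ S, (if t < a i then a i else 0) ≤ c * ∑ i, if t < a i then a i else 0 :=
    mul_le_mul_of_nonneg_left (sum_le_univ_sum_of_nonneg fun i => by split_ifs <;> simp [ha]) hc
  rw [split, mul_add]
  exact add_le_add small large

theorem admissible_implies_mismatch_sum_bound_general (d m : ℕ) (δ : ℝ)
    (Φ : Fin m → EuclideanSpace ℝ (Fin d))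
    (h1 : ∀ x y : EuclideanSpace ℝ (Fin d), x ≠ 0 → y ≠ 0 →
      ((univ.filter fun i => sgn ⟪x, Φ i⟫ ≠ sgn ⟪y, Φ i⟫).card : ℝ) / m
        ≤ δ + angle x y / Real.pi)
    (h3 : ∀ z : EuclideanSpace ℝ (Fin d),
      (1 / m : ℝ) * ∑ i, (if ⟪z, Φ i⟫ ^ 2 ≤ ‖z‖ ^ 2 / (δ * d) then ⟪z, Φ i⟫ ^ 4 else 0)
        ≤ 4 * ‖z‖ ^ 4 / d ^ 2)
    (h4 : ∀ z : EuclideanSpace ℝ (Fin d),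
      (1 / m : ℝ) * ∑ i, (if ‖z‖ ^ 2 / (δ * d) < ⟪z, Φ i⟫ ^ 2 then ⟪z, Φ i⟫ ^ 2 else 0)
        ≤ 4 * δ * ‖z‖ ^ 2 / d)
    (x y : EuclideanSpace ℝ (Fin d)) (hx : x ≠ 0) (hy : y ≠ 0) :
    (1 / m : ℝ) * ∑ i, (sgn ⟪x, Φ i⟫ - sgn ⟪y, Φ i⟫) ^ 2 * ⟪x - y, Φ i⟫ ^ 2
      ≤ (8 * Real.sqrt (δ + angle x y / Real.pi) + 16 * δ) * ‖x - y‖ ^ 2 / d := by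
  set z := x - y
  set S := univ.filter fun i => sgn ⟪x, Φ i⟫ ≠ sgn ⟪y, Φ i⟫
  have hS : (1 / m : ℝ) * #S ≤ δ + angle x y / Real.pi := by
    rw [one_div_mul_eq_div]; exact h1 x y hx hy
  have hsmall : √((1 / m : ℝ) * #S * ((1 / m : ℝ) *
      ∑ i, if ⟪z, Φ i⟫ ^ 2 ≤ ‖z‖ ^ 2 / (δ * d) then ⟪z, Φ i⟫ ^ 4 else 0))
      ≤ √(δ + angle x y / Real.pi) * (2 * ‖z‖ ^ 2 / d) := by
    have h3z : (1 / m : ℝ) *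
        ∑ i, (if ⟪z, Φ i⟫ ^ 2 ≤ ‖z‖ ^ 2 / (δ * d) then ⟪z, Φ i⟫ ^ 4 else 0)
        ≤ (2 * ‖z‖ ^ 2 / d) ^ 2 :=
      (h3 z).trans_eq (by ring)
    calc _ ≤ √((δ + angle x y / Real.pi) * (2 * ‖z‖ ^ 2 / d) ^ 2) :=
          Real.sqrt_le_sqrt (mul_le_mul hS h3z (by positivity) (hS.trans' (by positivity)))
      _ = √(δ + angle x y / Real.pi) * (2 * ‖z‖ ^ 2 / d) := by
          rw [Real.sqrt_mul' _ (sq_nonneg _), Real.sqrt_sq (by positivity)]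
  have key := mul_sum_le_sqrt_add_of_threshold S (a := fun i => ⟪z, Φ i⟫ ^ 2)
    (fun i => sq_nonneg _) (‖z‖ ^ 2 / (δ * d)) (c := 1 / m) (by positivity)
  simp only [← pow_mul, Nat.reduceMul] at key
  calc (1 / m : ℝ) * ∑ i, (sgn ⟪x, Φ i⟫ - sgn ⟪y, Φ i⟫) ^ 2 * ⟪z, Φ i⟫ ^ 2
      = 4 * ((1 / m : ℝ) * ∑ i ∈ S, ⟪z, Φ i⟫ ^ 2) := by rw [sum_sgn_sub_sgn_sq_mul]; ring
    _ ≤ 4 * (√(δ + angle x y / Real.pi) * (2 * ‖z‖ ^ 2 / d) + 4 * δ * ‖z‖ ^ 2 / d) := by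
      gcongr; exact key.trans (add_le_add hsmall (h4 z))
    _ = (8 * √(δ + angle x y / Real.pi) + 16 * δ) * ‖z‖ ^ 2 / d := by ring

/-- Suppose `Φ = (φ_1, …, φ_m)` are unit vectors in `ℝ^d` satisfying the
sign-mismatch count bound, the truncated fourth-moment bound, and the truncated
second-moment bound.  Then for all nonzero `x, y`,
`(1/m)Σ_i |σ(⟨x,φ_i⟩) − σ(⟨y,φ_i⟩)|²⟨x−y,φ_i⟩² ≤ (8√(δ + d(x̂,ŷ)) + 16δ)‖x−y‖²/d`. -/
theorem admissible_implies_mismatch_sum_bound (d m : ℕ) (δ : ℝ) (hδ : δ ∈ Set.Ioo (0 : ℝ) 1)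
    (Φ : Fin m → EuclideanSpace ℝ (Fin d)) (hunit : ∀ i, ‖Φ i‖ = 1)
    (h1 : ∀ x y : EuclideanSpace ℝ (Fin d), x ≠ 0 → y ≠ 0 →
      ((univ.filter fun i => sgn ⟪x, Φ i⟫ ≠ sgn ⟪y, Φ i⟫).card : ℝ) / m
        ≤ δ + angle x y / Real.pi)
    (h3 : ∀ z : EuclideanSpace ℝ (Fin d),
      (1 / m : ℝ) * ∑ i, (if ⟪z, Φ i⟫ ^ 2 ≤ ‖z‖ ^ 2 / (δ * d) then ⟪z, Φ i⟫ ^ 4 else 0)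
        ≤ 4 * ‖z‖ ^ 4 / d ^ 2)
    (h4 : ∀ z : EuclideanSpace ℝ (Fin d),
      (1 / m : ℝ) * ∑ i, (if ‖z‖ ^ 2 / (δ * d) < ⟪z, Φ i⟫ ^ 2 then ⟪z, Φ i⟫ ^ 2 else 0)
        ≤ 4 * δ * ‖z‖ ^ 2 / d)
    (x y : EuclideanSpace ℝ (Fin d)) (hx : x ≠ 0) (hy : y ≠ 0) :
    (1 / m : ℝ) * ∑ i, (sgn ⟪x, Φ i⟫ - sgn ⟪y, Φ i⟫) ^ 2 * ⟪x - y, Φ i⟫ ^ 2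
      ≤ (8 * Real.sqrt (δ + angle x y / Real.pi) + 16 * δ) * ‖x - y‖ ^ 2 / d :=
  admissible_implies_mismatch_sum_bound_general d m δ Φ h1 h3 h4 x y hx hy
end

section
/- Let δ ∈ (0,1) satisfy 8√(2δ) + 16δ ≤ 1/4, and let Φ = (φ_1,…,φ_m) be a δ-admissible system of unit vectors in ℝ^d. Then for all nonzero x, y ∈ ℝ^d with d(x̂,ŷ) ≤ δ, one has (1/m)Σ_{i=1}^m (|σ(⟨x,φ_i⟩) − σ(⟨y,φ_i⟩)|² − 1)·⟨x−y,φ_i⟩² ≤ −‖x−y‖²/(4d). -/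
open InnerProductGeometry Finset
open scoped RealInnerProductSpace Classical

/-- A system `Φ = (φ_1, …, φ_m)` of unit vectors in `ℝ^d` is `δ`-admissible if:
(1) for all nonzero `x, y`, the fraction of indices with `σ(⟨x,φ_i⟩) ≠ σ(⟨y,φ_i⟩)` is at
most `δ + θ_{x,y}/π`; (2) `‖z‖²/(2d) ≤ (1/m)Σ⟨z,φ_i⟩² ≤ 3‖z‖²/(2d)` for all `z`;
(3) `(1/m)Σ ⟨z,φ_i⟩⁴·1{⟨z,φ_i⟩² ≤ ‖z‖²/(δd)} ≤ 4‖z‖⁴/d²` for all `z`;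
(4) `(1/m)Σ ⟨z,φ_i⟩²·1{⟨z,φ_i⟩² > ‖z‖²/(δd)} ≤ 4δ‖z‖²/d` for all `z`. -/
def IsAdmissible (d m : ℕ) (δ : ℝ) (Φ : Fin m → EuclideanSpace ℝ (Fin d)) : Prop :=
  (∀ i, ‖Φ i‖ = 1) ∧
  (∀ x y : EuclideanSpace ℝ (Fin d), x ≠ 0 → y ≠ 0 →
    ((univ.filter fun i => sgn ⟪x, Φ i⟫ ≠ sgn ⟪y, Φ i⟫).card : ℝ) / m
      ≤ δ + angle x y / Real.pi) ∧
  (∀ z : EuclideanSpace ℝ (Fin d),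
    ‖z‖ ^ 2 / (2 * d) ≤ (1 / m : ℝ) * ∑ i, ⟪z, Φ i⟫ ^ 2 ∧
    (1 / m : ℝ) * ∑ i, ⟪z, Φ i⟫ ^ 2 ≤ 3 * ‖z‖ ^ 2 / (2 * d)) ∧
  (∀ z : EuclideanSpace ℝ (Fin d),
    (1 / m : ℝ) * ∑ i, (if ⟪z, Φ i⟫ ^ 2 ≤ ‖z‖ ^ 2 / (δ * d) then ⟪z, Φ i⟫ ^ 4 else 0)
      ≤ 4 * ‖z‖ ^ 4 / d ^ 2) ∧
  (∀ z : EuclideanSpace ℝ (Fin d),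
    (1 / m : ℝ) * ∑ i, (if ‖z‖ ^ 2 / (δ * d) < ⟪z, Φ i⟫ ^ 2 then ⟪z, Φ i⟫ ^ 2 else 0)
      ≤ 4 * δ * ‖z‖ ^ 2 / d)

/-!
Write `z = x - y` and let `S` be the set of indices where the signs of `⟨x,φ_i⟩` and `⟨y,φ_i⟩`
differ. The factor `(σ(⟨x,φ_i⟩) - σ(⟨y,φ_i⟩))² - 1` is `3` on `S` and `-1` off it, so the average
is `4·(1/m)Σ_{i∈S} ⟨z,φ_i⟩² - (1/m)Σ_i ⟨z,φ_i⟩²`, and the frame bound (2) makes the second term at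
least `‖z‖²/(2d)`. Since `θ_{x,y}/π ≤ δ`, condition (1) gives `#S/m ≤ 2δ`. On `S`, the indices with
`⟨z,φ_i⟩² > ‖z‖²/(δd)` contribute at most `4δ‖z‖²/d` by (4); for the others, Cauchy–Schwarz and (3)
give at most `√(#S/m) · √(4‖z‖⁴/d²) ≤ √(2δ)·2‖z‖²/d`. The hypothesis `8√(2δ) + 16δ ≤ 1/4` then
leaves `-‖z‖²/(4d)`.
-/

theorem sgn_eq_one_or_eq_neg_one (w : ℝ) : sgn w = 1 ∨ sgn w = -1 := by
  unfold sgn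
  split_ifs <;> simp

theorem sq_sgn_sub_sgn_sub_one_mul (a b c : ℝ) :
    ((sgn a - sgn b) ^ 2 - 1) * c = (if sgn a ≠ sgn b then 4 * c else 0) - c := by
  rcases sgn_eq_one_or_eq_neg_one a with ha | ha <;>
    rcases sgn_eq_one_or_eq_neg_one b with hb | hb <;> norm_num [ha, hb] <;> ring

theorem sum_sq_sgn_sub_sgn_sub_one_mul {ι : Type*} [Fintype ι] (f g c : ι → ℝ) :
    ∑ i, ((sgn (f i) - sgn (g i)) ^ 2 - 1) * c i
      = 4 * ∑ i ∈ univ.filter (fun i => sgn (f i) ≠ sgn (g i)), c i - ∑ i, c i := by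
  simp only [sq_sgn_sub_sgn_sub_one_mul, sum_sub_distrib, mul_sum, sum_filter, mul_ite, mul_zero]

theorem sq_inv_mul_sum_le {ι : Type*} (s : Finset ι) (a : ι → ℝ) (m : ℝ) :
    (1 / m * ∑ i ∈ s, a i) ^ 2 ≤ #s / m * (1 / m * ∑ i ∈ s, a i ^ 2) := by
  calc (1 / m * ∑ i ∈ s, a i) ^ 2 = (1 / m) ^ 2 * (∑ i ∈ s, a i) ^ 2 := by ring
    _ ≤ (1 / m) ^ 2 * (#s * ∑ i ∈ s, a i ^ 2) := by gcongr; exact sq_sum_le_card_mul_sum_sq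
    _ = #s / m * (1 / m * ∑ i ∈ s, a i ^ 2) := by ring

theorem sum_le_sum_filter_le_add_sum_ite_lt {ι : Type*} [Fintype ι] (s : Finset ι)
    (a : ι → ℝ) (ha : ∀ i, 0 ≤ a i) (K : ℝ) :
    ∑ i ∈ s, a i ≤ ∑ i ∈ s.filter (fun i => a i ≤ K), a i + ∑ i, if K < a i then a i else 0 := by
  rw [← sum_filter_add_sum_filter_not s (fun i => a i ≤ K), ← sum_filter]
  gcongr
  · exact fun i _ _ => ha i
  · intro i hi
    simp only [mem_filter, mem_univ, true_and, not_le] at hi ⊢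
    exact hi.2

theorem inv_mul_sum_sq_le_sqrt_add_of_card_div_le {ι : Type*} [Fintype ι] (s : Finset ι) (v : ι → ℝ)
    (m : ℕ) {K α A B : ℝ} (hcard : #s / m ≤ α)
    (hbulk : 1 / m * ∑ i, (if v i ^ 2 ≤ K then v i ^ 4 else 0) ≤ A)
    (htail : 1 / m * ∑ i, (if K < v i ^ 2 then v i ^ 2 else 0) ≤ B) :
    1 / m * ∑ i ∈ s, v i ^ 2 ≤ √(α * A) + B := by
  set T := s.filter fun i => v i ^ 2 ≤ K
  have hTcard : #T / m ≤ α := by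
    refine le_trans ?_ hcard
    gcongr
    exact filter_subset (fun i => v i ^ 2 ≤ K) s
  have hTbulk : 1 / m * ∑ i ∈ T, (v i ^ 2) ^ 2 ≤ A := by
    refine le_trans ?_ hbulk
    rw [← sum_filter]
    gcongr 1 / m * ?_
    simp only [← pow_mul, Nat.reduceMul]
    exact sum_le_sum_of_subset_of_nonneg (filter_subset_filter _ (subset_univ s))
      fun i _ _ => by positivity
  have hα : 0 ≤ α := (by positivity : (0 : ℝ) ≤ #s / m).trans hcard
  have hbulk_le : 1 / m * ∑ i ∈ T, v i ^ 2 ≤ √(α * A) :=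
    Real.le_sqrt_of_sq_le <| (sq_inv_mul_sum_le T _ m).trans <|
      mul_le_mul hTcard hTbulk (by positivity) hα
  calc 1 / m * ∑ i ∈ s, v i ^ 2
      ≤ 1 / m * (∑ i ∈ T, v i ^ 2 + ∑ i, if K < v i ^ 2 then v i ^ 2 else 0) := by
        gcongr
        exact sum_le_sum_filter_le_add_sum_ite_lt s _ (fun i => sq_nonneg _) K
    _ ≤ √(α * A) + B := by
        rw [mul_add]
        exact add_le_add hbulk_le htail

namespace IsAdmissible

variable {d m : ℕ} {δ : ℝ} {Φ : Fin m → EuclideanSpace ℝ (Fin d)}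

theorem card_sgn_ne_div_le (hΦ : IsAdmissible d m δ Φ) {x y : EuclideanSpace ℝ (Fin d)}
    (hx : x ≠ 0) (hy : y ≠ 0) (hclose : angle x y / Real.pi ≤ δ) :
    #(univ.filter fun i => sgn ⟪x, Φ i⟫ ≠ sgn ⟪y, Φ i⟫) / m ≤ 2 * δ := by
  obtain ⟨-, hdisagree, -⟩ := hΦ
  linarith [hdisagree x y hx hy]

theorem inv_mul_sum_sq_le_of_card_div_le (hΦ : IsAdmissible d m δ Φ) (s : Finset (Fin m))
    {α : ℝ} (hcard : #s / m ≤ α) (z : EuclideanSpace ℝ (Fin d)) :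
    1 / m * ∑ i ∈ s, ⟪z, Φ i⟫ ^ 2 ≤ √α * (2 * ‖z‖ ^ 2 / d) + 4 * δ * ‖z‖ ^ 2 / d := by
  obtain ⟨-, -, -, hbulk, htail⟩ := hΦ
  have h := inv_mul_sum_sq_le_sqrt_add_of_card_div_le s (fun i => ⟪z, Φ i⟫) m hcard
    (hbulk z) (htail z)
  rwa [show 4 * ‖z‖ ^ 4 / (d : ℝ) ^ 2 = (2 * ‖z‖ ^ 2 / d) ^ 2 by ring,
    Real.sqrt_mul' _ (sq_nonneg _), Real.sqrt_sq (by positivity)] at h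

end IsAdmissible

theorem admissible_implies_drift_bound_general (d m : ℕ) (δ : ℝ)
    (hδsmall : 8 * Real.sqrt (2 * δ) + 16 * δ ≤ 1 / 4)
    (Φ : Fin m → EuclideanSpace ℝ (Fin d)) (hΦ : IsAdmissible d m δ Φ)
    (x y : EuclideanSpace ℝ (Fin d)) (hx : x ≠ 0) (hy : y ≠ 0)
    (hclose : angle x y / Real.pi ≤ δ) :
    (1 / m : ℝ) * ∑ i, ((sgn ⟪x, Φ i⟫ - sgn ⟪y, Φ i⟫) ^ 2 - 1) * ⟪x - y, Φ i⟫ ^ 2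
      ≤ -(‖x - y‖ ^ 2 / (4 * d)) := by
  have hdisagree := hΦ.inv_mul_sum_sq_le_of_card_div_le _
    (hΦ.card_sgn_ne_div_le hx hy hclose) (x - y)
  have hframe := (hΦ.2.2.1 (x - y)).1
  have hsmall := mul_le_mul_of_nonneg_right hδsmall (by positivity : 0 ≤ ‖x - y‖ ^ 2 / d)
  rw [sum_sq_sgn_sub_sgn_sub_one_mul (fun i => ⟪x, Φ i⟫) (fun i => ⟪y, Φ i⟫)
    (fun i => ⟪x - y, Φ i⟫ ^ 2)]
  linear_combination 4 * hdisagree + hframe + hsmall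

/-- If `8√(2δ) + 16δ ≤ 1/4` and `Φ` is a `δ`-admissible system of unit
vectors, then for all nonzero `x, y` with `θ_{x,y}/π ≤ δ`,
`(1/m)Σ_i (|σ(⟨x,φ_i⟩) − σ(⟨y,φ_i⟩)|² − 1)·⟨x−y,φ_i⟩² ≤ −‖x−y‖²/(4d)`. -/
theorem admissible_implies_drift_bound (d m : ℕ) (δ : ℝ) (hδ : δ ∈ Set.Ioo (0 : ℝ) 1)
    (hδsmall : 8 * Real.sqrt (2 * δ) + 16 * δ ≤ 1 / 4)
    (Φ : Fin m → EuclideanSpace ℝ (Fin d)) (hΦ : IsAdmissible d m δ Φ)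
    (x y : EuclideanSpace ℝ (Fin d)) (hx : x ≠ 0) (hy : y ≠ 0)
    (hclose : angle x y / Real.pi ≤ δ) :
    (1 / m : ℝ) * ∑ i, ((sgn ⟪x, Φ i⟫ - sgn ⟪y, Φ i⟫) ^ 2 - 1) * ⟪x - y, Φ i⟫ ^ 2
      ≤ -(‖x - y‖ ^ 2 / (4 * d)) :=
  admissible_implies_drift_bound_general d m δ hδsmall Φ hΦ x y hx hy hclose
end

section
/- Let (Ω,ℱ,ℙ) be a probability space with filtration (ℱ_k)_{k≥0}, let (z_k)_{k≥0} be an adapted sequence of ℝ^d-valued random variables with z_0 almost surely equal to a fixed vector, let b > 0 with ‖z_0‖ ≤ b, let ρ ∈ (0,1), and suppose the conditional contraction hypothesis holds: for every k ≥ 0, almost surely 1{‖z_k‖ ≤ b}·E[‖z_{k+1}‖² | ℱ_k] ≤ ρ·‖z_k‖²·1{‖z_k‖ ≤ b}. Define the hitting time τ_b := min{j ≥ 0 : ‖z_j‖ > b} (with τ_b = ∞ if no such j exists). Then for all k ≥ 0 with ℙ(τ_b > k) > 0, E[‖z_{k+1}‖² | τ_b > k] ≤ ρ·E[‖z_k‖²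 | τ_b > k−1], and consequently E[‖z_k‖² | τ_b > k−1] ≤ ρ^k·‖z_0‖² for all k ≥ 0 with ℙ(τ_b > k−1) > 0 (the condition τ_b > −1 being vacuous). -/
/-!
On the event `{τ_b > k}` every `z_j` with `j ≤ k` lies in the ball of radius `b`, and this event is
`ℱ_k`-measurable, so integrating the conditional contraction over it gives
`E[‖z_{k+1}‖²; τ_b > k] ≤ ρ E[‖z_k‖²; τ_b > k]`. Passing from `{τ_b > k}` to the larger event
`{τ_b > k - 1}` only adds outcomes with `‖z_k‖ > b`, i.e. values of `‖z_k‖²` above every value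
averaged on `{τ_b > k}`, so the conditional mean of `‖z_k‖²` can only grow. Iterating from the
deterministic `z_0` gives the geometric bound.
-/

open MeasureTheory

/-- The paper's `E[f | s] := E[f · 1_s] / μ(s)`; it is `0` when `μ s = 0`. -/
noncomputable def condMean {α : Type*} {m : MeasurableSpace α} (μ : Measure α) (s : Set α)
    (f : α → ℝ) : ℝ :=
  (∫ x in s, f x ∂μ) / μ.real s

theorem condMean_le_condMean_of_subset {α : Type*} {m : MeasurableSpace α}
    {μ : Measure α} [IsFiniteMeasure μ] {s t : Set α} {f : α → ℝ} {c : ℝ}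
    (hs : MeasurableSet s) (ht : MeasurableSet t) (hst : s ⊆ t) (hf : IntegrableOn f t μ)
    (hμs : 0 < μ s) (hle : ∀ x ∈ s, f x ≤ c) (hge : ∀ x ∈ t \ s, c ≤ f x) :
    condMean μ s f ≤ condMean μ t f := by
  have hμs' : 0 < μ.real s := ENNReal.toReal_pos hμs.ne' (measure_ne_top μ s)
  have hint : ∫ x in t, f x ∂μ = (∫ x in s, f x ∂μ) + ∫ x in t \ s, f x ∂μ := by
    rw [← integral_inter_add_sdiff hs hf, Set.inter_eq_right.2 hst]
  have hmeas : μ.real t = μ.real s + μ.real (t \ s) := by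
    rw [← measureReal_inter_add_sdiff₀ hs.nullMeasurableSet, Set.inter_eq_right.2 hst]
  have hint_s : ∫ x in s, f x ∂μ ≤ c * μ.real s := by
    calc ∫ x in s, f x ∂μ ≤ ∫ _ in s, c ∂μ :=
          setIntegral_mono_on (hf.mono_set hst) (integrableOn_const (measure_ne_top μ s)) hs hle
      _ = c * μ.real s := by rw [setIntegral_const, smul_eq_mul, mul_comm]
  have hint_diff : c * μ.real (t \ s) ≤ ∫ x in t \ s, f x ∂μ :=
    setIntegral_ge_of_const_le_real (ht.diff hs) (measure_ne_top μ _) hge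
      (hf.mono_set Set.sdiff_subset)
  rw [condMean, condMean, hint, hmeas, div_le_div_iff₀ hμs' (by positivity)]
  nlinarith [measureReal_nonneg (μ := μ) (s := t \ s)]

theorem setIntegral_le_of_ae_condExp_le {Ω : Type*} {m m0 : MeasurableSpace Ω} {μ : Measure Ω}
    (hm : m ≤ m0) [SigmaFinite (μ.trim hm)] {s : Set Ω} (hs : MeasurableSet[m] s)
    {f g : Ω → ℝ} (hf : Integrable f μ) (hg : IntegrableOn g s μ)
    (hle : ∀ᵐ ω ∂μ, ω ∈ s → μ[f | m] ω ≤ g ω) :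
    ∫ ω in s, f ω ∂μ ≤ ∫ ω in s, g ω ∂μ := by
  rw [← setIntegral_condExp hm hf hs]
  exact setIntegral_mono_on_ae integrable_condExp.integrableOn hg (hm s hs) hle

section Survival

variable {Ω E : Type*} {m0 : MeasurableSpace Ω} [NormedAddCommGroup E] {z : ℕ → Ω → E} {b ρ : ℝ}
  {P : Measure Ω} [IsProbabilityMeasure P]

theorem condMean_survival_le_pow {z0 : E} (hz0 : ∀ᵐ ω ∂P, z 0 ω = z0) (hρ : 0 ≤ ρ)
    (hdrift : ∀ k : ℕ, 0 < P {ω | ∀ j ≤ k, ‖z j ω‖ ≤ b} →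
      condMean P {ω | ∀ j ≤ k, ‖z j ω‖ ≤ b} (fun ω => ‖z (k + 1) ω‖ ^ 2)
        ≤ ρ * condMean P {ω | ∀ j < k, ‖z j ω‖ ≤ b} (fun ω => ‖z k ω‖ ^ 2))
    (k : ℕ) (hpos : 0 < P {ω | ∀ j < k, ‖z j ω‖ ≤ b}) :
    condMean P {ω | ∀ j < k, ‖z j ω‖ ≤ b} (fun ω => ‖z k ω‖ ^ 2) ≤ ρ ^ k * ‖z0‖ ^ 2 := by
  induction k with
  | zero =>
    have huniv : {ω | ∀ j < 0, ‖z j ω‖ ≤ b} = Set.univ := by simp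
    rw [condMean, huniv, Measure.restrict_univ, integral_congr_ae (hz0.mono fun ω h => by rw [h])]
    simp
  | succ k ih =>
    simp only [Nat.lt_succ_iff] at hpos ⊢
    have hpos' : 0 < P {ω | ∀ j < k, ‖z j ω‖ ≤ b} :=
      hpos.trans_le (measure_mono fun ω hω j hj => hω j hj.le)
    calc _ ≤ ρ * condMean P {ω | ∀ j < k, ‖z j ω‖ ≤ b} (fun ω => ‖z k ω‖ ^ 2) := hdrift k hpos
      _ ≤ ρ * (ρ ^ k * ‖z0‖ ^ 2) := by gcongr; exact ih hpos'
      _ = ρ ^ (k + 1) * ‖z0‖ ^ 2 := by ring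

variable [MeasurableSpace E] [OpensMeasurableSpace E] {ℱ : Filtration ℕ m0}

theorem MeasureTheory.Adapted.measurableSet_setOf_forall_norm_le (hz : Adapted ℱ z)
    {p : ℕ → Prop} {n : ℕ} (hp : ∀ j, p j → j ≤ n) (b : ℝ) :
    MeasurableSet[ℱ n] {ω | ∀ j, p j → ‖z j ω‖ ≤ b} := by
  simp only [Set.ofPred_forall]
  exact MeasurableSet.iInter fun j => MeasurableSet.iInter fun hj =>
    measurable_norm.comp ((hz j).mono (ℱ.mono (hp j hj)) le_rfl) measurableSet_Iic

theorem condMean_survival_succ_le (hz : Adapted ℱ z) (hb : 0 ≤ b) (hρ : 0 ≤ ρ) {k : ℕ}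
    (hint : Integrable (fun ω => ‖z k ω‖ ^ 2) P)
    (hint_succ : Integrable (fun ω => ‖z (k + 1) ω‖ ^ 2) P)
    (hcontr : ∀ᵐ ω ∂P, ‖z k ω‖ ≤ b →
      (P[fun ω' => ‖z (k + 1) ω'‖ ^ 2 | ℱ k]) ω ≤ ρ * ‖z k ω‖ ^ 2)
    (hpos : 0 < P {ω | ∀ j ≤ k, ‖z j ω‖ ≤ b}) :
    condMean P {ω | ∀ j ≤ k, ‖z j ω‖ ≤ b} (fun ω => ‖z (k + 1) ω‖ ^ 2)
      ≤ ρ * condMean P {ω | ∀ j < k, ‖z j ω‖ ≤ b} (fun ω => ‖z k ω‖ ^ 2) := by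
  set A := {ω | ∀ j ≤ k, ‖z j ω‖ ≤ b}
  set B := {ω | ∀ j < k, ‖z j ω‖ ≤ b}
  have hA : MeasurableSet[ℱ k] A := hz.measurableSet_setOf_forall_norm_le (fun _ hj => hj) b
  have hB : MeasurableSet B :=
    ℱ.le k _ (hz.measurableSet_setOf_forall_norm_le (fun _ hj => hj.le) b)
  have hdrift : ∫ ω in A, ‖z (k + 1) ω‖ ^ 2 ∂P ≤ ρ * ∫ ω in A, ‖z k ω‖ ^ 2 ∂P := by
    rw [← integral_const_mul]
    refine setIntegral_le_of_ae_condExp_le (ℱ.le k) hA hint_succ (hint.const_mul ρ).integrableOn ?_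
    filter_upwards [hcontr] with ω hω hωA using hω (hωA k le_rfl)
  have hgrow : condMean P A (fun ω => ‖z k ω‖ ^ 2) ≤ condMean P B (fun ω => ‖z k ω‖ ^ 2) := by
    refine condMean_le_condMean_of_subset (c := b ^ 2) (ℱ.le k _ hA) hB
      (fun ω hω j hj => hω j hj.le) hint.integrableOn hpos ?_ ?_
    · exact fun ω hω => pow_le_pow_left₀ (norm_nonneg _) (hω k le_rfl) 2
    · rintro ω ⟨hωB, hωA⟩
      have hk : b < ‖z k ω‖ := by
        by_contra! hle
        exact hωA fun j hj => hj.lt_or_eq.elim (hωB j) (· ▸ hle)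
      exact pow_le_pow_left₀ hb hk.le 2
  calc condMean P A (fun ω => ‖z (k + 1) ω‖ ^ 2)
      ≤ (ρ * ∫ ω in A, ‖z k ω‖ ^ 2 ∂P) / P.real A := by unfold condMean; gcongr
    _ = ρ * condMean P A (fun ω => ‖z k ω‖ ^ 2) := mul_div_assoc _ _ _
    _ ≤ ρ * condMean P B (fun ω => ‖z k ω‖ ^ 2) := by gcongr

end Survival

theorem kaczmarz_recursive_contraction_general (d : ℕ) (Ω : Type) [m0 : MeasurableSpace Ω]
    (P : Measure Ω) [IsProbabilityMeasure P] (ℱ : Filtration ℕ m0)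
    (z : ℕ → Ω → EuclideanSpace ℝ (Fin d)) (hadapt : Adapted ℱ z)
    (z0 : EuclideanSpace ℝ (Fin d)) (hz0 : ∀ᵐ ω ∂P, z 0 ω = z0)
    (hint : ∀ k, Integrable (fun ω => ‖z k ω‖ ^ 2) P)
    (b : ℝ) (hb : 0 < b)
    (ρ : ℝ) (hρ : ρ ∈ Set.Ioo (0 : ℝ) 1)
    (hcontr : ∀ k : ℕ, ∀ᵐ ω ∂P, ‖z k ω‖ ≤ b →
      (P[fun ω' => ‖z (k + 1) ω'‖ ^ 2 | ℱ k]) ω ≤ ρ * ‖z k ω‖ ^ 2) :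
    (∀ k : ℕ, 0 < P {ω | ∀ j ≤ k, ‖z j ω‖ ≤ b} →
      (∫ ω in {ω | ∀ j ≤ k, ‖z j ω‖ ≤ b}, ‖z (k + 1) ω‖ ^ 2 ∂P)
          / (P {ω | ∀ j ≤ k, ‖z j ω‖ ≤ b}).toReal
        ≤ ρ * ((∫ ω in {ω | ∀ j < k, ‖z j ω‖ ≤ b}, ‖z k ω‖ ^ 2 ∂P)
          / (P {ω | ∀ j < k, ‖z j ω‖ ≤ b}).toReal)) ∧
    (∀ k : ℕ, 0 < P {ω | ∀ j < k, ‖z j ω‖ ≤ b} →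
      (∫ ω in {ω | ∀ j < k, ‖z j ω‖ ≤ b}, ‖z k ω‖ ^ 2 ∂P)
          / (P {ω | ∀ j < k, ‖z j ω‖ ≤ b}).toReal
        ≤ ρ ^ k * ‖z0‖ ^ 2) := by
  have hdrift := fun k => condMean_survival_succ_le hadapt hb.le hρ.1.le (hint k) (hint (k + 1))
    (hcontr k)
  exact ⟨hdrift, condMean_survival_le_pow hz0 hρ.1.le hdrift⟩

/-- Drift analysis for the error sequence: under the conditional
contraction hypothesis, with the hitting time `τ_b = min{j : ‖z_j‖ > b}` (so
`{τ_b > k} = {∀ j ≤ k, ‖z_j‖ ≤ b}` and `{τ_b > k−1} = {∀ j < k, ‖z_j‖ ≤ b}`), one has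
`E[‖z_{k+1}‖² | τ_b > k] ≤ ρ·E[‖z_k‖² | τ_b > k−1]` whenever `ℙ(τ_b > k) > 0`, and
consequently `E[‖z_k‖² | τ_b > k−1] ≤ ρ^k‖z_0‖²` whenever `ℙ(τ_b > k−1) > 0`
(here `E[X | A] := E[X·1_A]/ℙ(A)`). -/
theorem kaczmarz_recursive_contraction (d : ℕ) (Ω : Type) [m0 : MeasurableSpace Ω]
    (P : Measure Ω) [IsProbabilityMeasure P] (ℱ : Filtration ℕ m0)
    (z : ℕ → Ω → EuclideanSpace ℝ (Fin d)) (hadapt : Adapted ℱ z)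
    (z0 : EuclideanSpace ℝ (Fin d)) (hz0 : ∀ᵐ ω ∂P, z 0 ω = z0)
    (hint : ∀ k, Integrable (fun ω => ‖z k ω‖ ^ 2) P)
    (b : ℝ) (hb : 0 < b) (hz0b : ‖z0‖ ≤ b)
    (ρ : ℝ) (hρ : ρ ∈ Set.Ioo (0 : ℝ) 1)
    (hcontr : ∀ k : ℕ, ∀ᵐ ω ∂P, ‖z k ω‖ ≤ b →
      (P[fun ω' => ‖z (k + 1) ω'‖ ^ 2 | ℱ k]) ω ≤ ρ * ‖z k ω‖ ^ 2) :
    (∀ k : ℕ, 0 < P {ω | ∀ j ≤ k, ‖z j ω‖ ≤ b} →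
      (∫ ω in {ω | ∀ j ≤ k, ‖z j ω‖ ≤ b}, ‖z (k + 1) ω‖ ^ 2 ∂P)
          / (P {ω | ∀ j ≤ k, ‖z j ω‖ ≤ b}).toReal
        ≤ ρ * ((∫ ω in {ω | ∀ j < k, ‖z j ω‖ ≤ b}, ‖z k ω‖ ^ 2 ∂P)
          / (P {ω | ∀ j < k, ‖z j ω‖ ≤ b}).toReal)) ∧
    (∀ k : ℕ, 0 < P {ω | ∀ j < k, ‖z j ω‖ ≤ b} →
      (∫ ω in {ω | ∀ j < k, ‖z j ω‖ ≤ b}, ‖z k ω‖ ^ 2 ∂P)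
          / (P {ω | ∀ j < k, ‖z j ω‖ ≤ b}).toReal
        ≤ ρ ^ k * ‖z0‖ ^ 2) :=
  kaczmarz_recursive_contraction_general d Ω (m0 := m0) P ℱ z hadapt z0 hz0 hint b hb ρ hρ hcontr
end

section
/- Let (Ω,ℱ,ℙ) be a probability space with filtration (ℱ_k)_{k≥0}, let (z_k)_{k≥0} be an adapted sequence of ℝ^d-valued random variables with z_0 almost surely equal to a fixed vector, let b > 0 with ‖z_0‖ ≤ b, let ρ ∈ (0,1), and suppose the conditional contraction hypothesis holds. Define τ_b := min{j ≥ 0 : ‖z_j‖ > b} (= ∞ if no such j). If ℙ(τ_b = ∞) > 0, then for every k ≥ 1, E[‖z_k‖² | τ_b = ∞] ≤ ρ^k·‖z_0‖² / (1 − ℙ(τ_b < ∞)). -/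
open MeasureTheory

/-!
Let `S k` be the event that the process has stayed in the ball up to time `k - 1`. It is
`ℱ (k - 1)`-measurable, so the tower property and the contraction hypothesis (which applies on
`S (k + 1) ⊆ {‖z_k‖ ≤ b}`) give `E[‖z_{k+1}‖²; S (k+1)] ≤ ρ E[‖z_k‖²; S k]`, hence
`E[‖z_k‖²; S k] ≤ ρ^k ‖z_0‖²`. The stability event is contained in every `S k`, and its
probability is `1 − ℙ(τ_b < ∞)`.
-/

section ContractionOnEvents

variable {Ω : Type*} {m0 : MeasurableSpace Ω} {P : Measure Ω} {ℱ : Filtration ℕ m0}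
  {X : ℕ → Ω → ℝ} {G : ℕ → Set Ω} {ρ : ℝ}

theorem measurableSet_biInter_lt_succ_of_adapted (hG : ∀ k, MeasurableSet[ℱ k] (G k)) (k : ℕ) :
    MeasurableSet[ℱ k] (⋂ j < k + 1, G j) :=
  .biInter (Set.to_countable _) fun j hj => ℱ.mono (Nat.lt_succ_iff.mp hj) _ (hG j)

theorem setIntegral_succ_le_mul_of_condExp_le {k : ℕ} [SigmaFinite (P.trim (ℱ.le k))]
    (hG : ∀ k, MeasurableSet[ℱ k] (G k)) (hX : ∀ k, Integrable (X k) P)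
    (hX_nonneg : ∀ k, 0 ≤ᵐ[P] X k) (hρ : 0 ≤ ρ)
    (hcontr : ∀ᵐ ω ∂P, ω ∈ G k → P[X (k + 1) | ℱ k] ω ≤ ρ * X k ω) :
    ∫ ω in ⋂ j < k + 1, G j, X (k + 1) ω ∂P ≤ ρ * ∫ ω in ⋂ j < k, G j, X k ω ∂P := by
  have hS := measurableSet_biInter_lt_succ_of_adapted hG k
  calc ∫ ω in ⋂ j < k + 1, G j, X (k + 1) ω ∂P
      = ∫ ω in ⋂ j < k + 1, G j, P[X (k + 1) | ℱ k] ω ∂P :=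
        (setIntegral_condExp (ℱ.le k) (hX (k + 1)) hS).symm
    _ ≤ ∫ ω in ⋂ j < k + 1, G j, ρ * X k ω ∂P := by
        refine setIntegral_mono_ae_restrict integrable_condExp.integrableOn
          ((hX k).const_mul ρ).integrableOn ?_
        filter_upwards [ae_restrict_mem (ℱ.le k _ hS), ae_restrict_of_ae hcontr] with ω hω h
        rw [Set.biInter_lt_succ] at hω
        exact h hω.2
    _ ≤ ρ * ∫ ω in ⋂ j < k, G j, X k ω ∂P := by
        rw [integral_const_mul, Set.biInter_lt_succ]
        exact mul_le_mul_of_nonneg_left (setIntegral_mono_set (hX k).integrableOn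
          (ae_restrict_of_ae (hX_nonneg k)) Set.inter_subset_left.eventuallyLE) hρ

theorem setIntegral_biInter_lt_le_pow_mul_integral
    [∀ k, SigmaFinite (P.trim (ℱ.le k))]
    (hG : ∀ k, MeasurableSet[ℱ k] (G k)) (hX : ∀ k, Integrable (X k) P)
    (hX_nonneg : ∀ k, 0 ≤ᵐ[P] X k) (hρ : 0 ≤ ρ)
    (hcontr : ∀ k, ∀ᵐ ω ∂P, ω ∈ G k → P[X (k + 1) | ℱ k] ω ≤ ρ * X k ω) (k : ℕ) :
    ∫ ω in ⋂ j < k, G j, X k ω ∂P ≤ ρ ^ k * ∫ ω, X 0 ω ∂P := by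
  induction k with
  | zero => simp
  | succ k ih =>
    calc ∫ ω in ⋂ j < k + 1, G j, X (k + 1) ω ∂P
        ≤ ρ * ∫ ω in ⋂ j < k, G j, X k ω ∂P :=
          setIntegral_succ_le_mul_of_condExp_le hG hX hX_nonneg hρ (hcontr k)
      _ ≤ ρ * (ρ ^ k * ∫ ω, X 0 ω ∂P) := mul_le_mul_of_nonneg_left ih hρ
      _ = ρ ^ (k + 1) * ∫ ω, X 0 ω ∂P := by ring

end ContractionOnEvents

theorem conditional_error_decay_general (d : ℕ) (Ω : Type) [m0 : MeasurableSpace Ω]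
    (P : Measure Ω) [IsProbabilityMeasure P] (ℱ : Filtration ℕ m0)
    (z : ℕ → Ω → EuclideanSpace ℝ (Fin d)) (hadapt : Adapted ℱ z)
    (z0 : EuclideanSpace ℝ (Fin d)) (hz0 : ∀ᵐ ω ∂P, z 0 ω = z0)
    (hint : ∀ k, Integrable (fun ω => ‖z k ω‖ ^ 2) P)
    (b : ℝ)
    (ρ : ℝ) (hρ : ρ ∈ Set.Ioo (0 : ℝ) 1)
    (hcontr : ∀ k : ℕ, ∀ᵐ ω ∂P, ‖z k ω‖ ≤ b →
      (P[fun ω' => ‖z (k + 1) ω'‖ ^ 2 | ℱ k]) ω ≤ ρ * ‖z k ω‖ ^ 2) :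
    ∀ k : ℕ, 1 ≤ k →
      (∫ ω in {ω | ∀ j : ℕ, ‖z j ω‖ ≤ b}, ‖z k ω‖ ^ 2 ∂P)
          / (P {ω | ∀ j : ℕ, ‖z j ω‖ ≤ b}).toReal
        ≤ ρ ^ k * ‖z0‖ ^ 2 / (1 - (P {ω | ∃ j : ℕ, b < ‖z j ω‖}).toReal) := by
  intro k _
  have hball : ∀ j, MeasurableSet[ℱ j] {ω | ‖z j ω‖ ≤ b} := fun j =>
    measurable_norm.comp (hadapt j) measurableSet_Iic
  have hstable : {ω | ∀ j : ℕ, ‖z j ω‖ ≤ b} = ⋂ j, {ω | ‖z j ω‖ ≤ b} := by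
    ext ω; simp
  have hescape : {ω | ∃ j : ℕ, b < ‖z j ω‖} = {ω | ∀ j : ℕ, ‖z j ω‖ ≤ b}ᶜ := by
    ext ω; simp
  have hstable_meas : MeasurableSet {ω | ∀ j : ℕ, ‖z j ω‖ ≤ b} :=
    hstable ▸ .iInter fun j => ℱ.le j _ (hball j)
  have hinit : ∫ ω, ‖z 0 ω‖ ^ 2 ∂P = ‖z0‖ ^ 2 := by
    rw [integral_congr_ae (hz0.mono fun ω h => congrArg (‖·‖ ^ 2) h)]
    simp
  have hnum : ∫ ω in {ω | ∀ j : ℕ, ‖z j ω‖ ≤ b}, ‖z k ω‖ ^ 2 ∂P ≤ ρ ^ k * ‖z0‖ ^ 2 := by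
    refine le_trans ?_ (hinit ▸ setIntegral_biInter_lt_le_pow_mul_integral hball hint
      (fun k => ae_of_all _ fun ω => sq_nonneg _) hρ.1.le hcontr k)
    refine setIntegral_mono_set (hint k).integrableOn (ae_of_all _ fun ω => sq_nonneg _) ?_
    exact (hstable ▸ Set.subset_iInter₂ fun j _ => Set.iInter_subset _ j).eventuallyLE
  rw [hescape, ← measureReal_def, ← measureReal_def, probReal_compl_eq_one_sub hstable_meas,
    sub_sub_cancel, measureReal_def]
  exact div_le_div_of_nonneg_right hnum ENNReal.toReal_nonneg

/-- Under the conditional contraction hypothesis, conditioned on the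
stability event `{τ_b = ∞} = {∀ j, ‖z_j‖ ≤ b}` (assumed to have positive probability),
the squared error decays exponentially:
`E[‖z_k‖² | τ_b = ∞] ≤ ρ^k‖z_0‖² / (1 − ℙ(τ_b < ∞))` for all `k ≥ 1`
(here `E[X | A] := E[X·1_A]/ℙ(A)` and `{τ_b < ∞} = {∃ j, ‖z_j‖ > b}`). -/
theorem conditional_error_decay (d : ℕ) (Ω : Type) [m0 : MeasurableSpace Ω]
    (P : Measure Ω) [IsProbabilityMeasure P] (ℱ : Filtration ℕ m0)
    (z : ℕ → Ω → EuclideanSpace ℝ (Fin d)) (hadapt : Adapted ℱ z)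
    (z0 : EuclideanSpace ℝ (Fin d)) (hz0 : ∀ᵐ ω ∂P, z 0 ω = z0)
    (hint : ∀ k, Integrable (fun ω => ‖z k ω‖ ^ 2) P)
    (b : ℝ) (hb : 0 < b) (hz0b : ‖z0‖ ≤ b)
    (ρ : ℝ) (hρ : ρ ∈ Set.Ioo (0 : ℝ) 1)
    (hcontr : ∀ k : ℕ, ∀ᵐ ω ∂P, ‖z k ω‖ ≤ b →
      (P[fun ω' => ‖z (k + 1) ω'‖ ^ 2 | ℱ k]) ω ≤ ρ * ‖z k ω‖ ^ 2)
    (hpos : 0 < P {ω | ∀ j : ℕ, ‖z j ω‖ ≤ b}) :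
    ∀ k : ℕ, 1 ≤ k →
      (∫ ω in {ω | ∀ j : ℕ, ‖z j ω‖ ≤ b}, ‖z k ω‖ ^ 2 ∂P)
          / (P {ω | ∀ j : ℕ, ‖z j ω‖ ≤ b}).toReal
        ≤ ρ ^ k * ‖z0‖ ^ 2 / (1 - (P {ω | ∃ j : ℕ, b < ‖z j ω‖}).toReal) :=
  conditional_error_decay_general d Ω (m0 := m0) P ℱ z hadapt z0 hz0 hint b ρ hρ hcontr
end

section
/- Let (Ω,ℱ,ℙ) be a probability space with filtration (ℱ_k)_{k≥0}, let (z_k)_{k≥0} be an adapted sequence of ℝ^d-valued random variables with z_0 almost surely equal to a fixed vector, let b > 0 with ‖z_0‖ ≤ b, let ρ ∈ (0,1), and suppose the conditional contraction hypothesis holds. Define τ_b := min{j ≥ 0 : ‖z_j‖ > b} (= ∞ if no such j). Then for every k ≥ 1 and every a > 0, ℙ(‖z_k‖ ≥ ρ^{k/2}·a) ≤ (‖z_0‖/a)² + ℙ(τ_b < ∞). -/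
/-!
On the event `{k < τ_b}` that the iterates have stayed in the ball of radius `b` up to time `k`,
the contraction hypothesis applies at every step, so conditioning on `ℱ_n` and integrating over
`{n < τ_b} ∈ ℱ_n` gives `E[‖z_k‖²; k < τ_b] ≤ ρ^k ‖z_0‖²`. Chebyshev's inequality on this event
bounds `ℙ(‖z_k‖ ≥ ρ^{k/2} a, k < τ_b)` by `(‖z_0‖/a)²`, and the complementary event is contained
in `{τ_b < ∞}`.
-/

open MeasureTheory

section BoundedUpTo

variable {Ω E : Type*} [NormedAddCommGroup E] {z : ℕ → Ω → E} {b : ℝ}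

/-- The event `{n < τ_b}`. -/
def boundedUpTo (z : ℕ → Ω → E) (b : ℝ) (n : ℕ) : Set Ω :=
  {ω | ∀ j ≤ n, ‖z j ω‖ ≤ b}

lemma boundedUpTo_succ_subset (n : ℕ) : boundedUpTo z b (n + 1) ⊆ boundedUpTo z b n :=
  fun _ h j hj => h j (hj.trans n.le_succ)

lemma exists_lt_norm_of_notMem_boundedUpTo {n : ℕ} {ω : Ω} (h : ω ∉ boundedUpTo z b n) :
    ∃ j, b < ‖z j ω‖ := by
  simp only [boundedUpTo, Set.mem_ofPred_eq, not_forall, not_le] at h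
  obtain ⟨j, -, hj⟩ := h
  exact ⟨j, hj⟩

lemma measureReal_le_inter_boundedUpTo_add [MeasurableSpace Ω] {P : Measure Ω}
    [IsFiniteMeasure P] (s : Set Ω) (n : ℕ) :
    P.real s ≤ P.real (s ∩ boundedUpTo z b n) + P.real {ω | ∃ j, b < ‖z j ω‖} :=
  calc P.real s ≤ P.real (s ∩ boundedUpTo z b n ∪ {ω | ∃ j, b < ‖z j ω‖}) :=
        measureReal_mono fun ω hω => by
          by_cases hb : ω ∈ boundedUpTo z b n
          · exact .inl ⟨hω, hb⟩
          · exact .inr (exists_lt_norm_of_notMem_boundedUpTo hb)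
    _ ≤ P.real (s ∩ boundedUpTo z b n) + P.real {ω | ∃ j, b < ‖z j ω‖} :=
        measureReal_union_le _ _

variable [m0 : MeasurableSpace Ω] [MeasurableSpace E] [OpensMeasurableSpace E]

lemma MeasureTheory.Adapted.measurableSet_boundedUpTo {ℱ : Filtration ℕ m0}
    (hz : Adapted ℱ z) (b : ℝ) (n : ℕ) : MeasurableSet[ℱ n] (boundedUpTo z b n) := by
  have h : boundedUpTo z b n = ⋂ j, ⋂ (_ : j ≤ n), (fun ω => ‖z j ω‖) ⁻¹' Set.Iic b := by
    ext ω; simp [boundedUpTo]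
  rw [h]
  exact .iInter fun j => .iInter fun hj =>
    ℱ.mono hj _ ((measurable_norm.comp (hz j)) measurableSet_Iic)

variable {P : Measure Ω} [IsFiniteMeasure P] {ℱ : Filtration ℕ m0} {ρ : ℝ}

lemma setIntegral_boundedUpTo_succ_le (hz : Adapted ℱ z) {n : ℕ}
    (hint : Integrable (fun ω => ‖z n ω‖ ^ 2) P)
    (hint_succ : Integrable (fun ω => ‖z (n + 1) ω‖ ^ 2) P)
    (hcontr : ∀ᵐ ω ∂P, ‖z n ω‖ ≤ b →
      (P[fun ω' => ‖z (n + 1) ω'‖ ^ 2 | ℱ n]) ω ≤ ρ * ‖z n ω‖ ^ 2) :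
    ∫ ω in boundedUpTo z b (n + 1), ‖z (n + 1) ω‖ ^ 2 ∂P
      ≤ ρ * ∫ ω in boundedUpTo z b n, ‖z n ω‖ ^ 2 ∂P := by
  have hS := hz.measurableSet_boundedUpTo b n
  have hcontr_on : ∀ᵐ ω ∂P.restrict (boundedUpTo z b n),
      (P[fun ω' => ‖z (n + 1) ω'‖ ^ 2 | ℱ n]) ω ≤ ρ * ‖z n ω‖ ^ 2 := by
    filter_upwards [ae_restrict_of_ae hcontr, ae_restrict_mem (ℱ.le n _ hS)] with ω h hω
    exact h (hω n le_rfl)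
  calc ∫ ω in boundedUpTo z b (n + 1), ‖z (n + 1) ω‖ ^ 2 ∂P
      ≤ ∫ ω in boundedUpTo z b n, ‖z (n + 1) ω‖ ^ 2 ∂P :=
        setIntegral_mono_set hint_succ.integrableOn (ae_of_all _ fun _ => by positivity)
          (LE.le.eventuallyLE (boundedUpTo_succ_subset n))
    _ = ∫ ω in boundedUpTo z b n, (P[fun ω' => ‖z (n + 1) ω'‖ ^ 2 | ℱ n]) ω ∂P :=
        (setIntegral_condExp (ℱ.le n) hint_succ hS).symm
    _ ≤ ∫ ω in boundedUpTo z b n, ρ * ‖z n ω‖ ^ 2 ∂P :=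
        setIntegral_mono_ae_restrict integrable_condExp.integrableOn
          (hint.const_mul ρ).integrableOn hcontr_on
    _ = ρ * ∫ ω in boundedUpTo z b n, ‖z n ω‖ ^ 2 ∂P := integral_const_mul ρ _

lemma setIntegral_boundedUpTo_le_pow_mul (hz : Adapted ℱ z)
    (hint : ∀ k, Integrable (fun ω => ‖z k ω‖ ^ 2) P) (hρ : 0 ≤ ρ)
    (hcontr : ∀ k : ℕ, ∀ᵐ ω ∂P, ‖z k ω‖ ≤ b →
      (P[fun ω' => ‖z (k + 1) ω'‖ ^ 2 | ℱ k]) ω ≤ ρ * ‖z k ω‖ ^ 2) (n : ℕ) :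
    ∫ ω in boundedUpTo z b n, ‖z n ω‖ ^ 2 ∂P ≤ ρ ^ n * ∫ ω, ‖z 0 ω‖ ^ 2 ∂P := by
  induction n with
  | zero =>
    simpa using setIntegral_le_integral (hint 0) (ae_of_all _ fun _ => by positivity)
  | succ n ih =>
    calc ∫ ω in boundedUpTo z b (n + 1), ‖z (n + 1) ω‖ ^ 2 ∂P
        ≤ ρ * ∫ ω in boundedUpTo z b n, ‖z n ω‖ ^ 2 ∂P :=
          setIntegral_boundedUpTo_succ_le hz (hint n) (hint (n + 1)) (hcontr n)
      _ ≤ ρ * (ρ ^ n * ∫ ω, ‖z 0 ω‖ ^ 2 ∂P) := mul_le_mul_of_nonneg_left ih hρ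
      _ = ρ ^ (n + 1) * ∫ ω, ‖z 0 ω‖ ^ 2 ∂P := by ring

end BoundedUpTo

lemma measureReal_inter_le_setIntegral_norm_sq_div {Ω E : Type*} [MeasurableSpace Ω]
    [NormedAddCommGroup E] {P : Measure Ω} {f : Ω → E} {s : Set Ω} {t : ℝ}
    (hf : Integrable (fun ω => ‖f ω‖ ^ 2) P) (hs : MeasurableSet s) (ht : 0 < t) :
    P.real ({ω | t ≤ ‖f ω‖} ∩ s) ≤ (∫ ω in s, ‖f ω‖ ^ 2 ∂P) / t ^ 2 := by
  have hsq : {ω | t ≤ ‖f ω‖} = {ω | t ^ 2 ≤ ‖f ω‖ ^ 2} := by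
    ext ω
    simp only [Set.mem_ofPred_eq]
    exact (pow_le_pow_iff_left₀ ht.le (norm_nonneg _) two_ne_zero).symm
  rw [le_div_iff₀ (by positivity), mul_comm, hsq, ← measureReal_restrict_apply' hs]
  exact mul_meas_ge_le_integral_of_nonneg (ae_of_all _ fun _ => by positivity)
    hf.integrableOn _

theorem error_tail_probability_bound_general (d : ℕ) (Ω : Type) [m0 : MeasurableSpace Ω]
    (P : Measure Ω) [IsProbabilityMeasure P] (ℱ : Filtration ℕ m0)
    (z : ℕ → Ω → EuclideanSpace ℝ (Fin d)) (hadapt : Adapted ℱ z)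
    (z0 : EuclideanSpace ℝ (Fin d)) (hz0 : ∀ᵐ ω ∂P, z 0 ω = z0)
    (hint : ∀ k, Integrable (fun ω => ‖z k ω‖ ^ 2) P)
    (b : ℝ)
    (ρ : ℝ) (hρ : ρ ∈ Set.Ioo (0 : ℝ) 1)
    (hcontr : ∀ k : ℕ, ∀ᵐ ω ∂P, ‖z k ω‖ ≤ b →
      (P[fun ω' => ‖z (k + 1) ω'‖ ^ 2 | ℱ k]) ω ≤ ρ * ‖z k ω‖ ^ 2) :
    ∀ k : ℕ, 1 ≤ k → ∀ a : ℝ, 0 < a →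
      (P {ω | ρ ^ ((k : ℝ) / 2) * a ≤ ‖z k ω‖}).toReal
        ≤ (‖z0‖ / a) ^ 2 + (P {ω | ∃ j : ℕ, b < ‖z j ω‖}).toReal := by
  intro k _ a ha
  simp only [← measureReal_def]
  set t := ρ ^ ((k : ℝ) / 2) * a
  have ht : 0 < t := mul_pos (Real.rpow_pos_of_pos hρ.1 _) ha
  have ht_sq : t ^ 2 = ρ ^ k * a ^ 2 := by
    rw [mul_pow, ← Real.rpow_natCast _ 2, ← Real.rpow_mul hρ.1.le, ← Real.rpow_natCast ρ k]
    norm_num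
  have hS := ℱ.le k _ (hadapt.measurableSet_boundedUpTo b k)
  have hmoment : ∫ ω in boundedUpTo z b k, ‖z k ω‖ ^ 2 ∂P ≤ ρ ^ k * ‖z0‖ ^ 2 := by
    have h0 : ∫ ω, ‖z 0 ω‖ ^ 2 ∂P = ‖z0‖ ^ 2 :=
      calc ∫ ω, ‖z 0 ω‖ ^ 2 ∂P = ∫ _, ‖z0‖ ^ 2 ∂P :=
            integral_congr_ae (hz0.mono fun ω h => by simp only [h])
        _ = ‖z0‖ ^ 2 := by simp
    simpa [h0] using setIntegral_boundedUpTo_le_pow_mul hadapt hint hρ.1.le hcontr k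
  have hinside : P.real ({ω | t ≤ ‖z k ω‖} ∩ boundedUpTo z b k) ≤ (‖z0‖ / a) ^ 2 :=
    calc P.real ({ω | t ≤ ‖z k ω‖} ∩ boundedUpTo z b k)
        ≤ (∫ ω in boundedUpTo z b k, ‖z k ω‖ ^ 2 ∂P) / t ^ 2 :=
          measureReal_inter_le_setIntegral_norm_sq_div (hint k) hS ht
      _ ≤ ρ ^ k * ‖z0‖ ^ 2 / t ^ 2 := by gcongr
      _ = (‖z0‖ / a) ^ 2 := by rw [ht_sq]; field_simp [hρ.1.ne']
  calc P.real {ω | t ≤ ‖z k ω‖}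
      ≤ P.real ({ω | t ≤ ‖z k ω‖} ∩ boundedUpTo z b k) + P.real {ω | ∃ j, b < ‖z j ω‖} :=
        measureReal_le_inter_boundedUpTo_add _ k
    _ ≤ (‖z0‖ / a) ^ 2 + P.real {ω | ∃ j, b < ‖z j ω‖} := by gcongr

/-- Under the conditional contraction hypothesis, for every `k ≥ 1` and
`a > 0`, `ℙ(‖z_k‖ ≥ ρ^{k/2}·a) ≤ (‖z_0‖/a)² + ℙ(τ_b < ∞)`, where
`τ_b = min{j : ‖z_j‖ > b}` so that `{τ_b < ∞} = {∃ j, ‖z_j‖ > b}`. -/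
theorem error_tail_probability_bound (d : ℕ) (Ω : Type) [m0 : MeasurableSpace Ω]
    (P : Measure Ω) [IsProbabilityMeasure P] (ℱ : Filtration ℕ m0)
    (z : ℕ → Ω → EuclideanSpace ℝ (Fin d)) (hadapt : Adapted ℱ z)
    (z0 : EuclideanSpace ℝ (Fin d)) (hz0 : ∀ᵐ ω ∂P, z 0 ω = z0)
    (hint : ∀ k, Integrable (fun ω => ‖z k ω‖ ^ 2) P)
    (b : ℝ) (hb : 0 < b) (hz0b : ‖z0‖ ≤ b)
    (ρ : ℝ) (hρ : ρ ∈ Set.Ioo (0 : ℝ) 1)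
    (hcontr : ∀ k : ℕ, ∀ᵐ ω ∂P, ‖z k ω‖ ≤ b →
      (P[fun ω' => ‖z (k + 1) ω'‖ ^ 2 | ℱ k]) ω ≤ ρ * ‖z k ω‖ ^ 2) :
    ∀ k : ℕ, 1 ≤ k → ∀ a : ℝ, 0 < a →
      (P {ω | ρ ^ ((k : ℝ) / 2) * a ≤ ‖z k ω‖}).toReal
        ≤ (‖z0‖ / a) ^ 2 + (P {ω | ∃ j : ℕ, b < ‖z j ω‖}).toReal :=
  error_tail_probability_bound_general d Ω (m0 := m0) P ℱ z hadapt z0 hz0 hint b ρ hρ hcontr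
end

section
/- Let (Ω,ℱ,ℙ) be a probability space with filtration (ℱ_k)_{k≥0}, let (z_k)_{k≥0} be an adapted sequence of ℝ^d-valued random variables with z_0 almost surely equal to a fixed vector, let b > 0 with ‖z_0‖ ≤ b, let ρ ∈ (0,1), and suppose the conditional contraction hypothesis holds. Define τ_b := min{j ≥ 0 : ‖z_j‖ > b} (= ∞ if no such j). Then b²·ℙ(τ_b < ∞) + (ρ^{−1} − 1)·Σ_{k=1}^∞ E[‖z_{k+1}‖²·1{τ_b > k}] ≤ ρ·‖z_0‖²; in particular, ℙ(τ_b < ∞) ≤ ρ·(‖z_0‖/b)². -/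
open MeasureTheory Filter Finset

/-!
Write `S k = {τ_b > k}` and `a k = E[‖z_{k+1}‖² ; S k]`. Since `S k` is `ℱ_k`-measurable, the
contraction hypothesis integrates over `S k` to `a k ≤ ρ E[‖z_k‖² ; S k]`. On the other hand
`S k` splits into `S (k+1)` and `{τ_b = k+1}`, where `‖z_{k+1}‖² > b²`, so
`E[‖z_{k+1}‖² ; S (k+1)] ≤ a k - b² ℙ(τ_b = k+1)`. Together these give
`b² ℙ(τ_b = k+1) + ρ⁻¹ a (k+1) ≤ a k`, which telescopes to the claim because `a 0 ≤ ρ ‖z_0‖²`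
and `τ_b ≠ 0` almost surely.
-/

theorem tsum_add_tsum_le_of_telescoping {u v a : ℕ → ℝ} (hu : ∀ k, 0 ≤ u k)
    (hv : ∀ k, 0 ≤ v k) (ha : ∀ k, 0 ≤ a k) (h : ∀ k, u k + v k + a (k + 1) ≤ a k) :
    ∑' k, u k + ∑' k, v k ≤ a 0 := by
  have huv : ∀ k, 0 ≤ u k + v k := fun k => add_nonneg (hu k) (hv k)
  have hpartial : ∀ N, ∑ k ∈ range N, (u k + v k) ≤ a 0 := fun N =>
    calc ∑ k ∈ range N, (u k + v k) ≤ ∑ k ∈ range N, (a k - a (k + 1)) :=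
          sum_le_sum fun k _ => by linarith [h k]
      _ = a 0 - a N := sum_range_sub' a N
      _ ≤ a 0 := sub_le_self _ (ha N)
  have hsum := summable_of_sum_range_le huv hpartial
  rw [← Summable.tsum_add
    (hsum.of_nonneg_of_le hu fun k => le_add_of_nonneg_right (hv k))
    (hsum.of_nonneg_of_le hv fun k => le_add_of_nonneg_left (hu k))]
  exact Real.tsum_le_of_sum_range_le huv hpartial

theorem hasSum_measureReal_sdiff_succ {Ω : Type*} [MeasurableSpace Ω] {μ : Measure Ω}
    [IsFiniteMeasure μ] {s : ℕ → Set Ω} (hs : Antitone s) (hm : ∀ k, MeasurableSet (s k)) :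
    HasSum (fun k => μ.real (s k \ s (k + 1))) (μ.real (s 0) - μ.real (⋂ k, s k)) := by
  rw [hasSum_iff_tendsto_nat_of_nonneg fun _ => measureReal_nonneg]
  have hpartial : ∀ N, ∑ k ∈ range N, μ.real (s k \ s (k + 1)) = μ.real (s 0) - μ.real (s N) :=
    fun N => by
      rw [sum_congr rfl fun k _ => measureReal_sdiff (hs k.le_succ) (hm (k + 1))]
      exact sum_range_sub' (fun k => μ.real (s k)) N
  simp_rw [hpartial]
  exact tendsto_const_nhds.sub <| (ENNReal.tendsto_toReal (measure_ne_top μ _)).comp <|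
    tendsto_measure_iInter_atTop (fun k => (hm k).nullMeasurableSet) hs ⟨0, measure_ne_top μ _⟩

theorem setIntegral_le_of_condExp_le {Ω : Type*} {m m0 : MeasurableSpace Ω} {μ : Measure Ω}
    {f g : Ω → ℝ} {s : Set Ω} (hm : m ≤ m0) [SigmaFinite (μ.trim hm)] (hf : Integrable f μ)
    (hg : Integrable g μ) (hs : MeasurableSet[m] s) (h : ∀ᵐ ω ∂μ, ω ∈ s → μ[f | m] ω ≤ g ω) :
    ∫ ω in s, f ω ∂μ ≤ ∫ ω in s, g ω ∂μ := by
  rw [← setIntegral_condExp hm hf hs]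
  exact setIntegral_mono_on_ae integrable_condExp.integrableOn hg.integrableOn (hm s hs) h

section Survival

variable {Ω E : Type*} [NormedAddCommGroup E] (z : ℕ → Ω → E) (b : ℝ)

def survivalSet (k : ℕ) : Set Ω := {ω | ∀ j ≤ k, ‖z j ω‖ ≤ b}

theorem survivalSet_antitone : Antitone (survivalSet z b) :=
  fun _ _ hkl _ hω j hj => hω j (hj.trans hkl)

theorem compl_iInter_survivalSet : (⋂ k, survivalSet z b k)ᶜ = {ω | ∃ j, b < ‖z j ω‖} := by
  ext ω
  simp only [survivalSet, Set.mem_compl_iff, Set.mem_iInter, Set.mem_ofPred_eq, not_forall,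
    not_le, exists_prop]
  exact ⟨fun ⟨_, j, _, hj⟩ => ⟨j, hj⟩, fun ⟨j, hj⟩ => ⟨j, j, le_rfl, hj⟩⟩

variable {z b}

theorem lt_norm_of_mem_survivalSet_sdiff {k : ℕ} {ω : Ω}
    (hω : ω ∈ survivalSet z b k \ survivalSet z b (k + 1)) : b < ‖z (k + 1) ω‖ := by
  obtain ⟨hk, hk1⟩ := hω
  simp only [survivalSet, Set.mem_ofPred_eq, not_forall, not_le, exists_prop] at hk1
  obtain ⟨j, hj, hbj⟩ := hk1
  obtain rfl : j = k + 1 := by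
    by_contra hne
    exact (hk j (by omega)).not_gt hbj
  exact hbj

theorem measurableSet_survivalSet [m0 : MeasurableSpace Ω] [MeasurableSpace E]
    [OpensMeasurableSpace E] {ℱ : Filtration ℕ m0} (hz : Adapted ℱ z) (k : ℕ) :
    MeasurableSet[ℱ k] (survivalSet z b k) := by
  simp only [survivalSet, Set.ofPred_forall]
  refine MeasurableSet.iInter fun j => MeasurableSet.iInter fun hj => ?_
  exact measurable_norm.comp ((hz j).mono (ℱ.mono hj) le_rfl) measurableSet_Iic

theorem survivalSet_zero_ae_eq_univ [MeasurableSpace Ω] {P : Measure Ω} {z0 : E}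
    (hz0 : ∀ᵐ ω ∂P, z 0 ω = z0) (hz0b : ‖z0‖ ≤ b) :
    survivalSet z b 0 =ᵐ[P] Set.univ := by
  rw [eventuallyEq_univ]
  filter_upwards [hz0] with ω hω j hj
  obtain rfl := Nat.le_zero.1 hj
  rwa [hω]

end Survival

section Contraction

variable {Ω E : Type*} [m0 : MeasurableSpace Ω] [NormedAddCommGroup E] [MeasurableSpace E]
  [OpensMeasurableSpace E] {P : Measure Ω} {ℱ : Filtration ℕ m0} {z : ℕ → Ω → E} {b ρ : ℝ}

theorem setIntegral_survivalSet_le [IsFiniteMeasure P] (hadapt : Adapted ℱ z)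
    (hint : ∀ k, Integrable (fun ω => ‖z k ω‖ ^ 2) P)
    (hcontr : ∀ k : ℕ, ∀ᵐ ω ∂P, ‖z k ω‖ ≤ b →
      (P[fun ω' => ‖z (k + 1) ω'‖ ^ 2 | ℱ k]) ω ≤ ρ * ‖z k ω‖ ^ 2) (k : ℕ) :
    ∫ ω in survivalSet z b k, ‖z (k + 1) ω‖ ^ 2 ∂P
      ≤ ρ * ∫ ω in survivalSet z b k, ‖z k ω‖ ^ 2 ∂P := by
  rw [← integral_const_mul]
  refine setIntegral_le_of_condExp_le (ℱ.le k) (hint (k + 1)) ((hint k).const_mul ρ)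
    (measurableSet_survivalSet hadapt k) ?_
  filter_upwards [hcontr k] with ω hω hmem using hω (hmem k le_rfl)

theorem sq_mul_measureReal_add_inv_mul_setIntegral_le [IsFiniteMeasure P]
    (hadapt : Adapted ℱ z) (hint : ∀ k, Integrable (fun ω => ‖z k ω‖ ^ 2) P)
    (hb : 0 ≤ b) (hρ : 0 < ρ)
    (hcontr : ∀ k : ℕ, ∀ᵐ ω ∂P, ‖z k ω‖ ≤ b →
      (P[fun ω' => ‖z (k + 1) ω'‖ ^ 2 | ℱ k]) ω ≤ ρ * ‖z k ω‖ ^ 2) (k : ℕ) :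
    b ^ 2 * P.real (survivalSet z b k \ survivalSet z b (k + 1))
        + ρ⁻¹ * ∫ ω in survivalSet z b (k + 1), ‖z (k + 1 + 1) ω‖ ^ 2 ∂P
      ≤ ∫ ω in survivalSet z b k, ‖z (k + 1) ω‖ ^ 2 ∂P := by
  have hm : ∀ k, MeasurableSet (survivalSet z b k) := fun k =>
    ℱ.le k _ (measurableSet_survivalSet hadapt k)
  have hcontract : ρ⁻¹ * ∫ ω in survivalSet z b (k + 1), ‖z (k + 1 + 1) ω‖ ^ 2 ∂P
      ≤ ∫ ω in survivalSet z b (k + 1), ‖z (k + 1) ω‖ ^ 2 ∂P :=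
    (inv_mul_le_iff₀ hρ).2 (setIntegral_survivalSet_le hadapt hint hcontr (k + 1))
  have hsplit := integral_inter_add_sdiff (s := survivalSet z b k) (hm (k + 1))
    (hint (k + 1)).integrableOn
  rw [Set.inter_eq_right.2 (survivalSet_antitone z b k.le_succ)] at hsplit
  have hexit : b ^ 2 * P.real (survivalSet z b k \ survivalSet z b (k + 1))
      ≤ ∫ ω in survivalSet z b k \ survivalSet z b (k + 1), ‖z (k + 1) ω‖ ^ 2 ∂P :=
    setIntegral_ge_of_const_le_real ((hm k).diff (hm (k + 1))) (measure_ne_top P _)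
      (fun ω hω => pow_le_pow_left₀ hb (lt_norm_of_mem_survivalSet_sdiff hω).le 2)
      (hint (k + 1)).integrableOn
  linarith

theorem setIntegral_survivalSet_zero_le [IsProbabilityMeasure P] (hadapt : Adapted ℱ z)
    (hint : ∀ k, Integrable (fun ω => ‖z k ω‖ ^ 2) P) {z0 : E} (hz0 : ∀ᵐ ω ∂P, z 0 ω = z0)
    (hz0b : ‖z0‖ ≤ b)
    (hcontr : ∀ k : ℕ, ∀ᵐ ω ∂P, ‖z k ω‖ ≤ b →
      (P[fun ω' => ‖z (k + 1) ω'‖ ^ 2 | ℱ k]) ω ≤ ρ * ‖z k ω‖ ^ 2) :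
    ∫ ω in survivalSet z b 0, ‖z (0 + 1) ω‖ ^ 2 ∂P ≤ ρ * ‖z0‖ ^ 2 := by
  refine (setIntegral_survivalSet_le hadapt hint hcontr 0).trans_eq ?_
  rw [setIntegral_congr_set (survivalSet_zero_ae_eq_univ hz0 hz0b), setIntegral_univ,
    integral_congr_ae (hz0.mono fun ω hω => by rw [hω]), integral_const, probReal_univ, one_smul]

theorem hasSum_measureReal_survivalSet_sdiff [IsProbabilityMeasure P] (hadapt : Adapted ℱ z)
    {z0 : E} (hz0 : ∀ᵐ ω ∂P, z 0 ω = z0) (hz0b : ‖z0‖ ≤ b) :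
    HasSum (fun k => P.real (survivalSet z b k \ survivalSet z b (k + 1)))
      (P.real {ω | ∃ j, b < ‖z j ω‖}) := by
  have hm : ∀ k, MeasurableSet (survivalSet z b k) := fun k =>
    ℱ.le k _ (measurableSet_survivalSet hadapt k)
  have h := hasSum_measureReal_sdiff_succ (μ := P) (survivalSet_antitone z b) hm
  rwa [measureReal_congr (survivalSet_zero_ae_eq_univ hz0 hz0b), probReal_univ,
    ← probReal_compl_eq_one_sub (.iInter hm), compl_iInter_survivalSet] at h

end Contraction

/-- Under the conditional contraction hypothesis, with the hitting time
`τ_b = min{j : ‖z_j‖ > b}` (so `{τ_b < ∞} = {∃ j, ‖z_j‖ > b}` and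
`{τ_b > k} = {∀ j ≤ k, ‖z_j‖ ≤ b}`), one has
`b²·ℙ(τ_b < ∞) + (ρ⁻¹ − 1)·Σ_{k=1}^∞ E[‖z_{k+1}‖²·1{τ_b > k}] ≤ ρ‖z_0‖²`;
in particular `ℙ(τ_b < ∞) ≤ ρ·(‖z_0‖/b)²`.  (The sum over `k ≥ 1` is written as a `tsum`
over `ℕ` with the index shifted by one.) -/
theorem escape_probability_bound (d : ℕ) (Ω : Type) [m0 : MeasurableSpace Ω]
    (P : Measure Ω) [IsProbabilityMeasure P] (ℱ : Filtration ℕ m0)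
    (z : ℕ → Ω → EuclideanSpace ℝ (Fin d)) (hadapt : Adapted ℱ z)
    (z0 : EuclideanSpace ℝ (Fin d)) (hz0 : ∀ᵐ ω ∂P, z 0 ω = z0)
    (hint : ∀ k, Integrable (fun ω => ‖z k ω‖ ^ 2) P)
    (b : ℝ) (hb : 0 < b) (hz0b : ‖z0‖ ≤ b)
    (ρ : ℝ) (hρ : ρ ∈ Set.Ioo (0 : ℝ) 1)
    (hcontr : ∀ k : ℕ, ∀ᵐ ω ∂P, ‖z k ω‖ ≤ b →
      (P[fun ω' => ‖z (k + 1) ω'‖ ^ 2 | ℱ k]) ω ≤ ρ * ‖z k ω‖ ^ 2) :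
    b ^ 2 * (P {ω | ∃ j : ℕ, b < ‖z j ω‖}).toReal
        + (ρ⁻¹ - 1) * ∑' k : ℕ,
            ∫ ω in {ω | ∀ j ≤ k + 1, ‖z j ω‖ ≤ b}, ‖z (k + 1 + 1) ω‖ ^ 2 ∂P
      ≤ ρ * ‖z0‖ ^ 2 ∧
    (P {ω | ∃ j : ℕ, b < ‖z j ω‖}).toReal ≤ ρ * (‖z0‖ / b) ^ 2 := by
  obtain ⟨hρ0, hρ1⟩ := hρ
  set S := survivalSet z b
  have hρ' : 0 ≤ ρ⁻¹ - 1 := sub_nonneg.2 ((one_le_inv₀ hρ0).2 hρ1.le)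
  have hstep := sq_mul_measureReal_add_inv_mul_setIntegral_le hadapt hint hb.le hρ0 hcontr
  have hbound := tsum_add_tsum_le_of_telescoping
    (u := fun k => b ^ 2 * P.real (S k \ S (k + 1)))
    (v := fun k => (ρ⁻¹ - 1) * ∫ ω in S (k + 1), ‖z (k + 1 + 1) ω‖ ^ 2 ∂P)
    (a := fun k => ∫ ω in S k, ‖z (k + 1) ω‖ ^ 2 ∂P)
    (fun k => by positivity) (fun k => mul_nonneg hρ' (integral_nonneg fun ω => sq_nonneg _))
    (fun k => integral_nonneg fun ω => sq_nonneg _) (fun k => by linarith [hstep k])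
  rw [tsum_mul_left, tsum_mul_left,
    (hasSum_measureReal_survivalSet_sdiff hadapt hz0 hz0b).tsum_eq] at hbound
  have hmain := hbound.trans (setIntegral_survivalSet_zero_le hadapt hint hz0 hz0b hcontr)
  refine ⟨hmain, ?_⟩
  have hsum_nonneg : 0 ≤ (ρ⁻¹ - 1) * ∑' k, ∫ ω in S (k + 1), ‖z (k + 1 + 1) ω‖ ^ 2 ∂P :=
    mul_nonneg hρ' (tsum_nonneg fun k => integral_nonneg fun ω => sq_nonneg _)
  rw [div_pow, ← mul_div_assoc, le_div_iff₀ (by positivity), ← measureReal_def]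
  linarith
end
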